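/- Let A be a small category that has a terminal object, and let A▷ denote the category obtained from A by freely adjoining a new terminal object (Mathlib's WithTerminal A). Then the canonical full inclusion A ↪ A▷ is a Dwyer map. -/

import Mathlib

open CategoryTheory

/-- The minimal cosieve of `B` generated by the image of `I : A ⥤ B`:
the set of objects of `B` that are the codomain of some arrow whose domain lies
in the image of `I`. -/
def minCosieve {A B : Type*} [Category A] [Category B] (I : A ⥤ B) : Set B :=
  {w : B | ∃ a : A, Nonempty (I.obj a ⟶ w)}

/-- The corestriction of `I : A ⥤ B` to the minimal cosieve generated by its image. -/
def inclW {A B : Type*} [Category A] [Category B] (I : A ⥤ B) :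
    A ⥤ ObjectProperty.FullSubcategory (fun b => b ∈ minCosieve I) where
  obj a := ⟨I.obj a, a, ⟨𝟙 _⟩⟩
  map f := ObjectProperty.homMk (I.map f)
  map_id a := ObjectProperty.hom_ext _ (I.map_id a)
  map_comp f g := ObjectProperty.hom_ext _ (I.map_comp f g)

/-- A functor `I : A ⥤ B` is a Dwyer map if it is a full subcategory inclusion
(fully faithful and injective on objects), it is a sieve inclusion (classified by a
functor `χ : B ⥤ 𝟚` with `χ⁻¹(0)` equal to the image of `I`, where `𝟚 = Fin 2` is
the two-object poset category `{0 < 1}`), and the corestriction of `I` to the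
minimal cosieve `W` containing the image of `I` admits a right adjoint `R` whose
unit is the identity (a right adjoint left inverse). -/
structure IsDwyerMap {A B : Type*} [Category A] [Category B] (I : A ⥤ B) : Prop where
  full : I.Full
  faithful : I.Faithful
  injOnObj : Function.Injective I.obj
  sieve : ∃ χ : B ⥤ Fin 2, ∀ b : B, χ.obj b = 0 ↔ b ∈ Set.range I.obj
  rali : ∃ (R : ObjectProperty.FullSubcategory (fun b => b ∈ minCosieve I) ⥤ A)
    (h : inclW I ⋙ R = 𝟭 A) (adj : inclW I ⊣ R), adj.unit = eqToHom h.symm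

universe u

/-!
If `A` has a terminal object `⊤`, the functor `A▷ ⥤ A` sending the adjoined point to `⊤` is right
adjoint to the inclusion, with identity unit. Corestricting the inclusion to the cosieve generated
by `A` keeps this adjunction and its unit, and `A` is a sieve in `A▷`, classified by the functor
to `𝟚` that sends exactly the adjoined point to `1`.
-/

namespace CategoryTheory

section

variable {A B : Type*} [Category A] [Category B]

@[simps! unit]
def Adjunction.liftLeft {I : A ⥤ B} {R : B ⥤ A} (adj : I ⊣ R) (P : ObjectProperty B)
    (hI : ∀ a, P (I.obj a)) : P.lift I hI ⊣ P.ι ⋙ R :=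
  Adjunction.mkOfUnitCounit
    { unit := adj.unit
      counit :=
        { app w := ObjectProperty.homMk (adj.counit.app w.obj)
          naturality _ _ f := ObjectProperty.hom_ext _ (adj.counit.naturality f.hom) }
      left_triangle := by
        ext a
        simp
      right_triangle := by
        ext w
        simp }

theorem exists_rali_minCosieve_of_adjunction {I : A ⥤ B} {R : B ⥤ A} (h : I ⋙ R = 𝟭 A)
    (adj : I ⊣ R) (hunit : adj.unit = eqToHom h.symm) :
    ∃ (R' : ObjectProperty.FullSubcategory (fun b => b ∈ minCosieve I) ⥤ A)
      (h' : inclW I ⋙ R' = 𝟭 A) (adj' : inclW I ⊣ R'), adj'.unit = eqToHom h'.symm :=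
  ⟨ObjectProperty.ι _ ⋙ R, h, adj.liftLeft _ fun a => ⟨a, ⟨𝟙 _⟩⟩,
    (adj.liftLeft_unit _ _).trans hunit⟩

end

namespace WithTerminal

variable (C : Type*) [Category C]

theorem incl_obj_injective : Function.Injective (incl (C := C)).obj :=
  fun _ _ => of.inj

def sieveClassifier : WithTerminal C ⥤ Fin 2 :=
  liftToTerminal ((Functor.const C).obj 0) (Fin.isTerminalLast 1)

theorem sieveClassifier_obj_eq_zero_iff (b : WithTerminal C) :
    (sieveClassifier C).obj b = 0 ↔ b ∈ Set.range (incl (C := C)).obj := by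
  cases b with
  | of a => exact iff_of_true rfl ⟨a, rfl⟩
  | star => exact iff_of_false one_ne_zero (by rintro ⟨a, ⟨⟩⟩)

variable [Limits.HasTerminal C]

noncomputable def retraction : WithTerminal C ⥤ C :=
  liftToTerminal (𝟭 C) Limits.terminalIsTerminal

theorem incl_comp_retraction : incl ⋙ retraction C = 𝟭 C := rfl

noncomputable def inclAdjRetraction : incl ⊣ retraction C :=
  Adjunction.mkOfUnitCounit
    { unit :=
        { app a := 𝟙 a
          naturality _ _ f := (Category.comp_id f).trans (Category.id_comp f).symm }
      counit :=
        { app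
            | of _ => 𝟙 _
            | star => starTerminal.from _
          naturality := by
            rintro (x | _) (y | _) f
            · exact (Category.comp_id f).trans (Category.id_comp f).symm
            · rfl
            · exact (f : PEmpty).elim
            · rfl }
      left_triangle := by
        ext a
        exact (Category.id_comp _).trans (Category.id_comp _)
      right_triangle := by
        ext (b | _)
        · exact (Category.id_comp _).trans (Category.id_comp _)
        · exact Limits.terminalIsTerminal.hom_ext _ _ }

theorem inclAdjRetraction_unit :
    (inclAdjRetraction C).unit = eqToHom (incl_comp_retraction C).symm := rfl

end WithTerminal

end CategoryTheory

/-- If `A` has a terminal object, then the canonical inclusion `A ↪ A▷` of `A` into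
the category obtained from `A` by freely adjoining a new terminal object is a
Dwyer map. -/
theorem isDwyerMap_withTerminal_incl (A : Type*) [Category A] [Limits.HasTerminal A] :
    IsDwyerMap (WithTerminal.incl (C := A)) where
  full := inferInstance
  faithful := inferInstance
  injOnObj := WithTerminal.incl_obj_injective A
  sieve := ⟨_, WithTerminal.sieveClassifier_obj_eq_zero_iff A⟩
  rali := exists_rali_minCosieve_of_adjunction (WithTerminal.incl_comp_retraction A) _
    (WithTerminal.inclAdjRetraction_unit A)
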